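/- There exists a constant c > 0 such that for all u, w ∈ ℝ^J, the Lorenz 96 bilinear map satisfies ⟨B(u,u), w⟩ ≤ c·‖u‖·‖w‖·‖Πu‖, where ⟨·,·⟩ and ‖·‖ are the Euclidean inner product and norm on ℝ^J. -/

import Mathlib

/-!
Each coordinate `B(u,u)^j = u^{j-1} u^{j+1} - u^{j-2} u^{j-1}` is a difference of two monomials,
each containing a coordinate kept by `Π`. Since `3 ∣ J`, residues mod 3 of cyclic indices are
well defined, and either `u^{j-1}` is kept or both `u^{j+1}` and `u^{j-2}` are (their indices
are congruent mod 3). Hence `|B(u,u)^j| ≤ 2 ‖u‖ ‖Πu‖`, so `‖B(u,u)‖ ≤ 2 √J ‖u‖ ‖Πu‖`, and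
Cauchy–Schwarz gives the claim with `c = 2 √J`.
-/

/-- The symmetric bilinear map of the Lorenz 96 model, with coordinates
indexed cyclically modulo `J`. -/
noncomputable def lorenz96B (J : ℕ) [NeZero J]
    (u v : EuclideanSpace ℝ (Fin J)) : EuclideanSpace ℝ (Fin J) :=
  WithLp.toLp 2 (fun j => (1 / 2) * (v (j - 1) * u (j + 1) + u (j - 1) * v (j + 1)
    - v (j - 2) * u (j - 1) - u (j - 2) * v (j - 1)))

/-- The orthogonal projection of `ℝ^J` that keeps the coordinates whose
(1-based) index is not divisible by 3 and zeroes out every coordinate whose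
(1-based) index is divisible by 3.  (The index `j : Fin J` corresponds to the
1-based coordinate `j + 1`.) -/
noncomputable def lorenz96Proj (J : ℕ)
    (u : EuclideanSpace ℝ (Fin J)) : EuclideanSpace ℝ (Fin J) :=
  WithLp.toLp 2 (fun j => if ((j : ℕ) + 1) % 3 = 0 then 0 else u j)

theorem Fin.val_add_mod_of_dvd {n d : ℕ} (hd : d ∣ n) (a b : Fin n) :
    ((a + b : Fin n) : ℕ) % d = ((a : ℕ) + b) % d := by
  rw [Fin.val_add, Nat.mod_mod_of_dvd _ hd]

theorem Fin.val_sub_mod_of_dvd {n d : ℕ} (hd : d ∣ n) (a b : Fin n) :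
    ((a - b : Fin n) : ℕ) % d = (n - b + a) % d := by
  rw [Fin.val_sub, Nat.mod_mod_of_dvd _ hd]

theorem EuclideanSpace.norm_le_sqrt_card_mul {ι : Type*} [Fintype ι]
    (x : EuclideanSpace ℝ ι) {M : ℝ} (hM : ∀ i, |x i| ≤ M) :
    ‖x‖ ≤ √(Fintype.card ι) * M := by
  cases isEmpty_or_nonempty ι with
  | inl _ => simp [EuclideanSpace.norm_eq]
  | inr hι =>
    have hM₀ : 0 ≤ M := (abs_nonneg _).trans (hM hι.some)
    calc ‖x‖ = √(∑ i, |x i| ^ 2) := by simp [EuclideanSpace.norm_eq]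
      _ ≤ √(∑ _i : ι, M ^ 2) := by
        gcongr with i
        exact hM i
      _ = √(Fintype.card ι) * M := by
        rw [Finset.sum_const, Finset.card_univ, nsmul_eq_mul, Real.sqrt_mul (Nat.cast_nonneg _),
          Real.sqrt_sq hM₀]

section Lorenz96

variable {J : ℕ}

theorem lorenz96B_self_apply [NeZero J] (u : EuclideanSpace ℝ (Fin J)) (j : Fin J) :
    lorenz96B J u u j = u (j - 1) * u (j + 1) - u (j - 2) * u (j - 1) := by
  simp only [lorenz96B]
  ring

theorem abs_mul_apply_le_norm_mul_norm_lorenz96Proj (u : EuclideanSpace ℝ (Fin J)) {i : Fin J}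
    (hi : (i : ℕ) % 3 ≠ 2) (k : Fin J) :
    |u i * u k| ≤ ‖u‖ * ‖lorenz96Proj J u‖ := by
  have hproj : lorenz96Proj J u i = u i := if_neg (by omega)
  rw [abs_mul, mul_comm ‖u‖]
  refine mul_le_mul ?_ (PiLp.norm_apply_le u k) (abs_nonneg _) (norm_nonneg _)
  simpa [hproj] using PiLp.norm_apply_le (lorenz96Proj J u) i

theorem lorenz96_neighbours_mod_ne [NeZero J] (hJ : 3 ∣ J) (j : Fin J) :
    ((j + 1 : Fin J) : ℕ) % 3 ≠ 2 ∧ ((j - 2 : Fin J) : ℕ) % 3 ≠ 2 ∨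
      ((j - 1 : Fin J) : ℕ) % 3 ≠ 2 := by
  have hJ3 : 3 ≤ J := Nat.le_of_dvd (NeZero.pos J) hJ
  have h1 : ((1 : Fin J) : ℕ) = 1 := by rw [Fin.val_one']; exact Nat.mod_eq_of_lt (by omega)
  have h2 : ((2 : Fin J) : ℕ) = 2 := by
    rw [Fin.coe_ofNat_eq_mod]; exact Nat.mod_eq_of_lt (by omega)
  rw [Fin.val_add_mod_of_dvd hJ, Fin.val_sub_mod_of_dvd hJ, Fin.val_sub_mod_of_dvd hJ, h1, h2]
  omega

theorem abs_lorenz96B_self_apply_le [NeZero J] (hJ : 3 ∣ J)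
    (u : EuclideanSpace ℝ (Fin J)) (j : Fin J) :
    |lorenz96B J u u j| ≤ 2 * ‖u‖ * ‖lorenz96Proj J u‖ := by
  rw [lorenz96B_self_apply]
  refine (abs_sub _ _).trans ?_
  rcases lorenz96_neighbours_mod_ne hJ j with ⟨hnext, hprev⟩ | hmid
  · rw [mul_comm (u (j - 1))]
    linarith [abs_mul_apply_le_norm_mul_norm_lorenz96Proj u hnext (j - 1),
      abs_mul_apply_le_norm_mul_norm_lorenz96Proj u hprev (j - 1)]
  · rw [mul_comm (u (j - 2))]
    linarith [abs_mul_apply_le_norm_mul_norm_lorenz96Proj u hmid (j + 1),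
      abs_mul_apply_le_norm_mul_norm_lorenz96Proj u hmid (j - 2)]

theorem norm_lorenz96B_self_le [NeZero J] (hJ : 3 ∣ J) (u : EuclideanSpace ℝ (Fin J)) :
    ‖lorenz96B J u u‖ ≤ 2 * √J * ‖u‖ * ‖lorenz96Proj J u‖ := by
  calc ‖lorenz96B J u u‖ ≤ √(Fintype.card (Fin J)) * (2 * ‖u‖ * ‖lorenz96Proj J u‖) :=
        EuclideanSpace.norm_le_sqrt_card_mul _ (abs_lorenz96B_self_apply_le hJ u)
    _ = 2 * √J * ‖u‖ * ‖lorenz96Proj J u‖ := by rw [Fintype.card_fin]; ring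

end Lorenz96

theorem lorenz96B_inner_le_proj_general (J J' : ℕ) [NeZero J]
    (hJ3 : J = 3 * J') :
    ∃ c : ℝ, 0 < c ∧ ∀ u w : EuclideanSpace ℝ (Fin J),
      inner (𝕜 := ℝ) (lorenz96B J u u) w
        ≤ c * ‖u‖ * ‖w‖ * ‖lorenz96Proj J u‖ := by
  have hJ : 3 ∣ J := ⟨J', hJ3⟩
  have hJ_pos : (0 : ℝ) < J := mod_cast NeZero.pos J
  refine ⟨2 * √J, by positivity, fun u w => ?_⟩
  calc inner ℝ (lorenz96B J u u) w ≤ ‖lorenz96B J u u‖ * ‖w‖ := real_inner_le_norm _ _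
    _ ≤ 2 * √J * ‖u‖ * ‖lorenz96Proj J u‖ * ‖w‖ := by
        gcongr
        exact norm_lorenz96B_self_le hJ u
    _ = 2 * √J * ‖u‖ * ‖w‖ * ‖lorenz96Proj J u‖ := by ring

theorem lorenz96B_inner_le_proj (J J' : ℕ) [NeZero J]
    (hJ3 : J = 3 * J') (hJ4 : 4 ≤ J) :
    ∃ c : ℝ, 0 < c ∧ ∀ u w : EuclideanSpace ℝ (Fin J),
      inner (𝕜 := ℝ) (lorenz96B J u u) w
        ≤ c * ‖u‖ * ‖w‖ * ‖lorenz96Proj J u‖ :=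
  lorenz96B_inner_le_proj_general J J' hJ3
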